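/- With the twisted Hodge operators *^A and *^{Aᵗ} defined by ω ∧ (*^B μ) = ⟨(∧ˡB)ω, μ⟩ dx for B = A, Aᵗ, one has on l-forms the identity *^A ∘ *^{Aᵗ} = *^{Aᵗ} ∘ *^A = (−1)^{l(n−l)} det(ι⁻¹Aᵗ) · Id. -/

import Mathlib

open Finset

noncomputable section

abbrev FormIdx (n k : ℕ) := {s : Finset (Fin n) // s.card = k}

abbrev KForm (n k : ℕ) := FormIdx n k → ℝ

def subEmb {n k : ℕ} (S : FormIdx n k) : Fin k → Fin n := fun j => (S.1.orderIsoOfFin S.2 j : Fin n)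

/-- the bilinear pairing `(ω|μ)_A = ⟨(∧ˡA)ω, μ⟩` -/
def pairingA {n k : ℕ} (A : Matrix (Fin n) (Fin n) ℝ) (u v : KForm n k) : ℝ :=
  ∑ T : FormIdx n k, ∑ S : FormIdx n k,
    (A.submatrix (subEmb S) (subEmb T)).det * u T * v S

/-- the linear map on `k`-forms induced by a matrix acting on covectors
(e.g. `formMap Aᵀ = ∧ᵏ(ι⁻¹Aᵗ)`) -/
def formMap {n k : ℕ} (B : Matrix (Fin n) (Fin n) ℝ) (u : KForm n k) : KForm n k :=
  fun S => ∑ T : FormIdx n k, (B.submatrix (subEmb S) (subEmb T)).det * u T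

/-- sign of the shuffle putting the block `t` before the block `s` -/
def shuffleSign {n : ℕ} (t s : Finset (Fin n)) : ℝ :=
  (-1 : ℝ) ^ (∑ x ∈ t, (s.filter (· < x)).card)

/-- exterior (wedge) product -/
def wedgeP {n k l : ℕ} (α : KForm n k) (β : KForm n l) : KForm n (k + l) :=
  fun S => ∑ T : FormIdx n k, if h : T.1 ⊆ S.1 then
    shuffleSign T.1 (S.1 \ T.1) * α T * β ⟨S.1 \ T.1, by
      rw [Finset.card_sdiff, Finset.inter_eq_left.mpr h, S.2, T.2]; omega⟩ else 0

/-- the coefficient of `dx₁∧⋯∧dxₙ` of a top-degree form (zero unless `m = n`) -/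
def topCoeff {n m : ℕ} (v : KForm n m) : ℝ :=
  if h : m = n then v ⟨Finset.univ, by subst h; simp⟩ else 0

/-- the standard Euclidean Hodge star -/
def hodgeStd {n l : ℕ} (hl : l ≤ n) (μ : KForm n l) : KForm n (n - l) :=
  fun S => shuffleSign S.1ᶜ S.1 * μ ⟨S.1ᶜ, by
    rw [Finset.card_compl, S.2, Fintype.card_fin]; omega⟩

/-- re-indexing of a form along an equality of degrees -/
def castForm {n m m' : ℕ} (h : m = m') (v : KForm n m) : KForm n m' :=
  fun S => v ⟨S.1, by rw [S.2, h]⟩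

/-! The defining identity `ω ∧ *^B μ = (ω|μ)_B dx`, tested against basis forms, shows that
`*^B μ = *(∧Bᵀ μ)` for the Euclidean star `*`. Both composites are then instances of
`∧Mᵀ ∘ * ∘ ∧M = det M • *` (for `M = A` and `M = Aᵀ`) followed by `** = (-1)^{l(n-l)}`.
The former is the generalized Laplace expansion of `det M` along complementary blocks of
columns: every permutation of `Fin n` factors uniquely as the shuffle of a block `T` with `Tᶜ`
after permutations of the two blocks, and the shuffle's sign, computed from its inversions,
is `shuffleSign T Tᶜ`. -/

open scoped Matrix

theorem Matrix.det_transpose_submatrix {ι κ R : Type*} [CommRing R] [Fintype κ] [DecidableEq κ]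
    (B : Matrix ι ι R) (r c : κ → ι) : (Bᵀ.submatrix r c).det = (B.submatrix c r).det := by
  rw [← Matrix.transpose_submatrix, Matrix.det_transpose]

variable {n k m : ℕ}

theorem subEmb_eq_orderEmbOfFin (S : FormIdx n k) : subEmb S = S.1.orderEmbOfFin S.2 :=
  funext (S.1.coe_orderIsoOfFin_apply S.2)

theorem subEmb_strictMono (S : FormIdx n k) : StrictMono (subEmb S) := by
  rw [subEmb_eq_orderEmbOfFin]; exact (S.1.orderEmbOfFin S.2).strictMono

theorem range_subEmb (S : FormIdx n k) : Set.range (subEmb S) = S.1 := by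
  rw [subEmb_eq_orderEmbOfFin, range_orderEmbOfFin]

theorem subEmb_mem (S : FormIdx n k) (a : Fin k) : subEmb S a ∈ S.1 := by
  rw [subEmb_eq_orderEmbOfFin]; exact orderEmbOfFin_mem S.1 S.2 a

def FormIdx.compl (h : k + m = n) (S : FormIdx n k) : FormIdx n m :=
  ⟨S.1ᶜ, by rw [card_compl, S.2, Fintype.card_fin]; omega⟩

theorem FormIdx.compl_compl (h : k + m = n) (h' : m + k = n) (S : FormIdx n k) :
    (S.compl h).compl h' = S :=
  Subtype.ext (_root_.compl_compl S.1)

theorem shuffleSign_mul_self (t s : Finset (Fin n)) : shuffleSign t s * shuffleSign t s = 1 := by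
  rw [shuffleSign, ← pow_add, ← two_mul, pow_mul, neg_one_sq, one_pow]

theorem shuffleSign_comm {t s : Finset (Fin n)} (hts : Disjoint t s) :
    shuffleSign s t = (-1) ^ (#t * #s) * shuffleSign t s := by
  have hpair : ∀ x ∈ t, ∀ y ∈ s, (if y < x then 1 else 0) + (if x < y then 1 else 0) = 1 := by
    intro x hx y hy
    have hne : x ≠ y := fun hxy => disjoint_left.1 hts hx (hxy ▸ hy)
    rcases hne.lt_or_gt with hxy | hxy <;> simp [hxy, hxy.not_gt]
  have hexp : ∑ x ∈ t, #(s.filter (· < x)) + ∑ y ∈ s, #(t.filter (· < y)) = #t * #s := by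
    simp only [card_filter]
    rw [sum_comm (s := s), ← sum_add_distrib]
    simp only [← sum_add_distrib]
    rw [sum_congr rfl fun x hx => sum_congr rfl (hpair x hx)]
    simp
  calc shuffleSign s t = shuffleSign t s * shuffleSign t s * shuffleSign s t := by
        rw [shuffleSign_mul_self, one_mul]
    _ = (-1) ^ (#t * #s) * shuffleSign t s := by
        rw [← hexp, pow_add]
        simp only [shuffleSign]
        ring

theorem shuffleSign_compl_comm (h : k + m = n) (T : FormIdx n k) :
    shuffleSign T.1ᶜ T.1 = (-1) ^ (k * m) * shuffleSign T.1 T.1ᶜ := by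
  subst h
  rw [shuffleSign_comm disjoint_compl_right, T.2, card_compl, Fintype.card_fin, T.2,
    Nat.add_sub_cancel_left]

def finSplit (h : k + m = n) : Fin k ⊕ Fin m ≃ Fin n :=
  finSumFinEquiv.trans (finCongr h)

def FormIdx.blockEquiv (h : k + m = n) (T : FormIdx n k) : Fin k ⊕ Fin m ≃ Fin n :=
  finSumEquivOfFinset T.2 (T.compl h).2

theorem FormIdx.coe_blockEquiv (h : k + m = n) (T : FormIdx n k) :
    ⇑(T.blockEquiv h) = Sum.elim (subEmb T) (subEmb (T.compl h)) := by
  funext a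
  rcases a with a | b <;> simp only [subEmb_eq_orderEmbOfFin] <;> rfl

def FormIdx.shufflePerm (h : k + m = n) (T : FormIdx n k) : Equiv.Perm (Fin n) :=
  (finSplit h).symm.trans (T.blockEquiv h)

theorem FormIdx.shufflePerm_inv_lt_iff (h : k + m = n) (T : FormIdx n k) {i j : Fin n}
    (hij : i < j) :
    (T.shufflePerm h)⁻¹ i < (T.shufflePerm h)⁻¹ j ↔ i ∈ T.1 ∨ j ∉ T.1 := by
  obtain ⟨u, rfl⟩ := (T.blockEquiv h).surjective i
  obtain ⟨v, rfl⟩ := (T.blockEquiv h).surjective j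
  have hinv : ∀ w, (T.shufflePerm h)⁻¹ (T.blockEquiv h w) = finSplit h w := by
    intro w; simp [shufflePerm, Equiv.Perm.inv_def]
  simp only [hinv]
  rw [coe_blockEquiv] at hij ⊢
  have hT := subEmb_mem T
  have hTc : ∀ b, subEmb (T.compl h) b ∉ T.1 := fun b => mem_compl.1 (subEmb_mem (T.compl h) b)
  rcases u with a | a <;> rcases v with b | b <;>
    simp [finSplit, hT, hTc, (subEmb_strictMono _).lt_iff_lt] at hij ⊢ <;>
    simp only [Fin.lt_def, Fin.le_def, Fin.val_castAdd, Fin.val_natAdd] at hij ⊢ <;> omega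

theorem FormIdx.sign_shufflePerm (h : k + m = n) (T : FormIdx n k) :
    ((Equiv.Perm.sign (T.shufflePerm h) : ℤ) : ℝ) = shuffleSign T.1 T.1ᶜ := by
  have hrow : ∀ j, ∏ i ∈ Iio j,
      (if (T.shufflePerm h)⁻¹ i < (T.shufflePerm h)⁻¹ j then 1 else -1 : ℝ) =
        if j ∈ T.1 then (-1) ^ #(T.1ᶜ.filter (· < j)) else 1 := by
    intro j
    rw [prod_congr rfl fun i hi => if_congr (T.shufflePerm_inv_lt_iff h (mem_Iio.1 hi)) rfl rfl]
    split_ifs with hj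
    · simp only [hj, not_true_eq_false, or_false, prod_ite, prod_const_one, one_mul, prod_const]
      congr 2
      ext i
      simp [and_comm]
    · simp [hj]
  rw [← Equiv.Perm.sign_inv, Equiv.Perm.sign_eq_prod_prod_Iio]
  push_cast
  simp only [apply_ite (fun u : ℤˣ => ((u : ℤ) : ℝ)), Units.val_one, Units.val_neg, Int.cast_one,
    Int.cast_neg, hrow]
  rw [Fintype.prod_ite_mem, prod_pow_eq_pow_sum, shuffleSign]

def FormIdx.blockPerm (h : k + m = n) (T : FormIdx n k) (σ₁ : Equiv.Perm (Fin k))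
    (σ₂ : Equiv.Perm (Fin m)) : Equiv.Perm (Fin n) :=
  T.shufflePerm h * (finSplit h).permCongr (σ₁.sumCongr σ₂)

theorem FormIdx.blockPerm_finSplit (h : k + m = n) (T : FormIdx n k) (σ₁ : Equiv.Perm (Fin k))
    (σ₂ : Equiv.Perm (Fin m)) (u : Fin k ⊕ Fin m) :
    T.blockPerm h σ₁ σ₂ (finSplit h u) = T.blockEquiv h (σ₁.sumCongr σ₂ u) := by
  simp [blockPerm, shufflePerm, Equiv.permCongr_apply]

theorem FormIdx.sign_blockPerm (h : k + m = n) (T : FormIdx n k) (σ₁ : Equiv.Perm (Fin k))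
    (σ₂ : Equiv.Perm (Fin m)) :
    ((Equiv.Perm.sign (T.blockPerm h σ₁ σ₂) : ℤ) : ℝ) =
      shuffleSign T.1 T.1ᶜ * (Equiv.Perm.sign σ₁ : ℤ) * (Equiv.Perm.sign σ₂ : ℤ) := by
  rw [blockPerm, map_mul, Equiv.Perm.sign_permCongr, Equiv.Perm.sign_sumCongr]
  push_cast
  rw [T.sign_shufflePerm h, mul_assoc]

theorem FormIdx.blockPerm_bijective (h : k + m = n) :
    Function.Bijective
      fun x : FormIdx n k × Equiv.Perm (Fin k) × Equiv.Perm (Fin m) =>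
        x.1.blockPerm h x.2.1 x.2.2 := by
  rw [Fintype.bijective_iff_injective_and_card]
  refine ⟨?_, ?_⟩
  · rintro ⟨T, σ₁, σ₂⟩ ⟨T', σ₁', σ₂'⟩ heq
    have happ : ∀ u, T.blockEquiv h (σ₁.sumCongr σ₂ u) = T'.blockEquiv h (σ₁'.sumCongr σ₂' u) :=
      fun u => by
        rw [← blockPerm_finSplit, ← blockPerm_finSplit]; exact congrArg (· (finSplit h u)) heq
    simp only [coe_blockEquiv] at happ
    have h₁ : ∀ a, subEmb T (σ₁ a) = subEmb T' (σ₁' a) := fun a => happ (.inl a)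
    have h₂ : ∀ b, subEmb (T.compl h) (σ₂ b) = subEmb (T'.compl h) (σ₂' b) :=
      fun b => happ (.inr b)
    obtain rfl : T = T' := by
      refine Subtype.ext (Finset.coe_injective ?_)
      rw [← range_subEmb, ← range_subEmb, ← EquivLike.range_comp (subEmb T) σ₁,
        ← EquivLike.range_comp (subEmb T') σ₁']
      exact congrArg Set.range (funext h₁)
    obtain rfl : σ₁ = σ₁' := Equiv.ext fun a => (subEmb_strictMono T).injective (h₁ a)
    obtain rfl : σ₂ = σ₂' := Equiv.ext fun b => (subEmb_strictMono _).injective (h₂ b)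
    rfl
  · subst h
    simp only [Fintype.card_prod, Fintype.card_perm, Fintype.card_finset_len, Fintype.card_fin]
    rw [← Nat.add_choose_mul_factorial_mul_factorial, Nat.choose_symm_add]
    ring

theorem det_submatrix_sumElim_eq_sum (h : k + m = n) (M : Matrix (Fin n) (Fin n) ℝ)
    (p : Fin k → Fin n) (q : Fin m → Fin n) :
    (M.submatrix id (Sum.elim p q ∘ (finSplit h).symm)).det =
      ∑ T : FormIdx n k, shuffleSign T.1 T.1ᶜ *
        ((M.submatrix (subEmb T) p).det * (M.submatrix (subEmb (T.compl h)) q).det) := by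
  have hprod : ∀ (T : FormIdx n k) σ₁ σ₂,
      ∏ i, M (T.blockPerm h σ₁ σ₂ i) (Sum.elim p q ((finSplit h).symm i)) =
        (∏ a, M (subEmb T (σ₁ a)) (p a)) * ∏ b, M (subEmb (T.compl h) (σ₂ b)) (q b) := by
    intro T σ₁ σ₂
    rw [← (finSplit h).prod_comp, Fintype.prod_sum_type]
    simp [FormIdx.blockPerm_finSplit, FormIdx.coe_blockEquiv]
  rw [Matrix.det_apply', ← Fintype.sum_bijective _ (FormIdx.blockPerm_bijective h) _ _
    fun _ => rfl, Fintype.sum_prod_type]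
  refine sum_congr rfl fun T _ => ?_
  simp only [Matrix.submatrix_apply, id, Function.comp_apply,
    FormIdx.sign_blockPerm, hprod, Fintype.sum_prod_type]
  rw [Matrix.det_apply', Matrix.det_apply', sum_mul_sum, mul_sum]
  refine sum_congr rfl fun σ₁ _ => ?_
  rw [mul_sum]
  refine sum_congr rfl fun σ₂ _ => ?_
  simp only [Matrix.submatrix_apply]
  ring

theorem det_submatrix_sumElim_subEmb (h : k + m = n) (M : Matrix (Fin n) (Fin n) ℝ)
    (U : FormIdx n k) (R : FormIdx n m) :
    (M.submatrix id (Sum.elim (subEmb U) (subEmb R) ∘ (finSplit h).symm)).det =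
      if R = U.compl h then shuffleSign U.1 U.1ᶜ * M.det else 0 := by
  split_ifs with hR
  · subst hR
    rw [← U.coe_blockEquiv h]
    exact (Matrix.det_permute' (U.shufflePerm h) M).trans (by rw [U.sign_shufflePerm h])
  · obtain ⟨x, hxR, hxU⟩ : ∃ x ∈ R.1, x ∈ U.1 := by
      by_contra! hdisj
      refine hR (Subtype.ext (eq_of_subset_of_card_le (fun x hx => mem_compl.2 (hdisj x hx)) ?_))
      rw [R.2, (U.compl h).2]
    obtain ⟨a, rfl⟩ : ∃ a, subEmb U a = x := by rw [← Set.mem_range, range_subEmb]; exact hxU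
    obtain ⟨b, hb⟩ : ∃ b, subEmb R b = subEmb U a := by
      rw [← Set.mem_range, range_subEmb]; exact hxR
    refine Matrix.det_zero_of_column_eq (i := finSplit h (.inl a)) (j := finSplit h (.inr b))
      ((finSplit h).injective.ne Sum.inl_ne_inr) fun r => ?_
    simp [hb]

theorem topCoeff_wedgeP (h : k + m = n) (ω : KForm n k) (ν : KForm n m) :
    topCoeff (wedgeP ω ν) = ∑ T : FormIdx n k, shuffleSign T.1 T.1ᶜ * ω T * ν (T.compl h) := by
  rw [topCoeff, dif_pos h]
  exact sum_congr rfl fun T _ => dif_pos (subset_univ _)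

theorem eq_of_forall_topCoeff_wedgeP_eq (h : k + m = n) {ν ν' : KForm n m}
    (hνν' : ∀ ω : KForm n k, topCoeff (wedgeP ω ν) = topCoeff (wedgeP ω ν')) : ν = ν' := by
  funext U
  set V : FormIdx n k := U.compl (by omega)
  have hU := hνν' (Pi.single V 1)
  simp only [topCoeff_wedgeP h, Pi.single_apply, mul_ite, ite_mul, mul_one, mul_zero, zero_mul,
    sum_ite_eq', mem_univ, if_true, V, FormIdx.compl_compl] at hU
  linear_combination shuffleSign V.1 V.1ᶜ * hU - (ν U - ν' U) * shuffleSign_mul_self V.1 V.1ᶜ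

theorem hodgeStd_apply_compl (hk : k ≤ n) (h : k + (n - k) = n) (ν : KForm n k)
    (T : FormIdx n k) : hodgeStd hk ν (T.compl h) = shuffleSign T.1 T.1ᶜ * ν T := by
  simp [hodgeStd, FormIdx.compl]

theorem topCoeff_wedgeP_hodgeStd (hk : k ≤ n) (ω ν : KForm n k) :
    topCoeff (wedgeP ω (hodgeStd hk ν)) = ∑ T, ω T * ν T := by
  rw [topCoeff_wedgeP (by omega)]
  refine sum_congr rfl fun T _ => ?_
  rw [hodgeStd_apply_compl]
  linear_combination ω T * ν T * shuffleSign_mul_self T.1 T.1ᶜ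

theorem pairingA_eq_sum_formMap (B : Matrix (Fin n) (Fin n) ℝ) (ω μ : KForm n k) :
    pairingA B ω μ = ∑ T, ω T * formMap Bᵀ μ T := by
  simp only [pairingA, formMap, Matrix.det_transpose_submatrix, mul_sum]
  exact sum_congr rfl fun T _ => sum_congr rfl fun S _ => by ring

theorem eq_hodgeStd_formMap_transpose (hk : k ≤ n) (B : Matrix (Fin n) (Fin n) ℝ)
    (star : KForm n k → KForm n (n - k))
    (hstar : ∀ ω μ : KForm n k, topCoeff (wedgeP ω (star μ)) = pairingA B ω μ) (μ : KForm n k) :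
    star μ = hodgeStd hk (formMap Bᵀ μ) :=
  eq_of_forall_topCoeff_wedgeP_eq (k := k) (by omega) fun ω => by
    rw [hstar, topCoeff_wedgeP_hodgeStd, pairingA_eq_sum_formMap]

theorem hodgeStd_smul (hk : k ≤ n) (c : ℝ) (ν : KForm n k) :
    hodgeStd hk (c • ν) = c • hodgeStd hk ν := by
  funext U
  simp only [hodgeStd, Pi.smul_apply, smul_eq_mul]
  ring

theorem castForm_hodgeStd_hodgeStd (hk : k ≤ n) (h : n - (n - k) = k) (μ : KForm n k) :
    castForm h (hodgeStd (Nat.sub_le n k) (hodgeStd hk μ)) = (-1 : ℝ) ^ (k * (n - k)) • μ := by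
  funext S
  simp only [castForm, hodgeStd, compl_compl, Pi.smul_apply, smul_eq_mul]
  rw [shuffleSign_compl_comm (m := n - k) (by omega) S]
  linear_combination (-1 : ℝ) ^ (k * (n - k)) * μ S * shuffleSign_mul_self S.1 S.1ᶜ

theorem castForm_smul {m m' : ℕ} (h : m = m') (c : ℝ) (v : KForm n m) :
    castForm h (c • v) = c • castForm h v :=
  rfl

theorem formMap_transpose_hodgeStd_formMap (hk : k ≤ n) (M : Matrix (Fin n) (Fin n) ℝ)
    (μ : KForm n k) : formMap Mᵀ (hodgeStd hk (formMap M μ)) = M.det • hodgeStd hk μ := by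
  have h : n - k + k = n := by omega
  funext U
  calc formMap Mᵀ (hodgeStd hk (formMap M μ)) U
      = ∑ R, (-1) ^ (k * (n - k)) * (∑ T : FormIdx n (n - k), shuffleSign T.1 T.1ᶜ *
          ((M.submatrix (subEmb T) (subEmb U)).det *
            (M.submatrix (subEmb (T.compl h)) (subEmb R)).det)) * μ R := by
        simp only [formMap, hodgeStd, FormIdx.compl, Matrix.det_transpose_submatrix, mul_sum,
          sum_mul]
        rw [sum_comm]
        refine sum_congr rfl fun R _ => sum_congr rfl fun T _ => ?_
        rw [shuffleSign_compl_comm h T]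
        ring
    _ = ∑ R, (-1) ^ (k * (n - k)) *
          (if R = U.compl h then shuffleSign U.1 U.1ᶜ * M.det else 0) * μ R := by
        simp only [← det_submatrix_sumElim_eq_sum, det_submatrix_sumElim_subEmb]
    _ = (M.det • hodgeStd hk μ) U := by
        simp only [mul_ite, ite_mul, mul_zero, zero_mul, sum_ite_eq', mem_univ, if_true]
        rw [Pi.smul_apply, smul_eq_mul, hodgeStd, shuffleSign_compl_comm h U]
        simp only [FormIdx.compl]
        ring

theorem castForm_comp_of_twisted_hodge (hk : k ≤ n) (B : Matrix (Fin n) (Fin n) ℝ)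
    (star₁ : KForm n k → KForm n (n - k)) (star₂ : KForm n (n - k) → KForm n (n - (n - k)))
    (h₁ : ∀ ω μ : KForm n k, topCoeff (wedgeP ω (star₁ μ)) = pairingA Bᵀ ω μ)
    (h₂ : ∀ ω μ : KForm n (n - k), topCoeff (wedgeP ω (star₂ μ)) = pairingA B ω μ)
    (h : n - (n - k) = k) (μ : KForm n k) :
    castForm h (star₂ (star₁ μ)) = ((-1 : ℝ) ^ (k * (n - k)) * B.det) • μ := by
  rw [eq_hodgeStd_formMap_transpose (Nat.sub_le n k) B star₂ h₂,
    eq_hodgeStd_formMap_transpose hk Bᵀ star₁ h₁, Matrix.transpose_transpose,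
    formMap_transpose_hodgeStd_formMap, hodgeStd_smul, castForm_smul,
    castForm_hodgeStd_hodgeStd, smul_smul, mul_comm]

/-- `*^A ∘ *^{Aᵗ} = *^{Aᵗ} ∘ *^A = (−1)^{l(n−l)} det(ι⁻¹Aᵗ) · Id` on `l`-forms, where the
twisted Hodge operators are characterized by `ω ∧ (*^B μ) = (ω|μ)_B dx` for `B = A, Aᵗ`. -/
theorem twisted_hodge_double {n l : ℕ} (hl : l ≤ n)
    (A : Matrix (Fin n) (Fin n) ℝ)
    (starA₁ : KForm n l → KForm n (n - l))
    (starA₂ : KForm n (n - l) → KForm n (n - (n - l)))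
    (starAt₁ : KForm n l → KForm n (n - l))
    (starAt₂ : KForm n (n - l) → KForm n (n - (n - l)))
    (hA₁ : ∀ ω μ : KForm n l, topCoeff (wedgeP ω (starA₁ μ)) = pairingA A ω μ)
    (hA₂ : ∀ ω μ : KForm n (n - l), topCoeff (wedgeP ω (starA₂ μ)) = pairingA A ω μ)
    (hAt₁ : ∀ ω μ : KForm n l,
      topCoeff (wedgeP ω (starAt₁ μ)) = pairingA A.transpose ω μ)
    (hAt₂ : ∀ ω μ : KForm n (n - l),
      topCoeff (wedgeP ω (starAt₂ μ)) = pairingA A.transpose ω μ) :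
    (∀ μ : KForm n l,
      castForm (by omega) (starA₂ (starAt₁ μ))
        = ((-1 : ℝ) ^ (l * (n - l)) * A.transpose.det) • μ) ∧
    (∀ μ : KForm n l,
      castForm (by omega) (starAt₂ (starA₁ μ))
        = ((-1 : ℝ) ^ (l * (n - l)) * A.transpose.det) • μ) := by
  refine ⟨fun μ => ?_, fun μ => ?_⟩
  · rw [Matrix.det_transpose]
    exact castForm_comp_of_twisted_hodge hl A starAt₁ starA₂ hAt₁ hA₂ _ μ
  · rw [← A.transpose_transpose] at hA₁
    exact castForm_comp_of_twisted_hodge hl Aᵀ starA₁ starAt₂ hA₁ hAt₂ _ μ
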